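/- arXiv:1706.06738 — 3 statements merged into one kernel-verified Lean document; each statement's English description precedes it below -/
import Mathlib

section
/- Fix an integer t ≥ 1 and a t-decomposable partition λ. Then any two t-rim hook tableaux of λ have the same sign; that is, the product ∏_j (−1)^{ht(ν_j) − 1} over the t-rim hooks ν_j removed in the chain is independent of the choice of t-rim hook tableau of λ. -/
open scoped BigOperators

/-- Two cells of `ℕ × ℕ` are adjacent if they differ by one in exactly one coordinate. -/
def CellAdj (a b : ℕ × ℕ) : Prop :=
  (a.1 = b.1 ∧ (a.2 = b.2 + 1 ∨ b.2 = a.2 + 1)) ∨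
  (a.2 = b.2 ∧ (a.1 = b.1 + 1 ∨ b.1 = a.1 + 1))

/-- A finite set of cells is connected if any two of its cells are joined by a path of
adjacent cells inside the set. -/
def CellsConnected (s : Finset (ℕ × ℕ)) : Prop :=
  ∀ x ∈ s, ∀ y ∈ s, Relation.ReflTransGen (fun a b => a ∈ s ∧ b ∈ s ∧ CellAdj a b) x y

/-- `RemoveHook t μ ν` : `ν` is obtained from `μ` by removing a `t`-rim hook, i.e. a connected
set of `t` boundary cells of the Young diagram of `μ` whose removal leaves a Young diagram. -/
def RemoveHook (t : ℕ) (μ ν : YoungDiagram) : Prop :=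
  ν.cells ⊆ μ.cells ∧ (μ.cells \ ν.cells).card = t ∧
  (∀ c ∈ μ.cells \ ν.cells, (c.1 + 1, c.2 + 1) ∉ μ) ∧
  CellsConnected (μ.cells \ ν.cells)

/-- A partition is a `t`-core if it admits no `t`-rim hook. -/
def IsTCore (t : ℕ) (μ : YoungDiagram) : Prop := ¬ ∃ ν, RemoveHook t μ ν

/-- `κ` is the `t`-core of `μ`: it is reachable from `μ` by removing `t`-rim hooks and admits
no further `t`-rim hook. -/
def IsTCoreOf (t : ℕ) (μ κ : YoungDiagram) : Prop :=
  Relation.ReflTransGen (RemoveHook t) μ κ ∧ IsTCore t κ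

/-- A partition is `t`-decomposable if it can be reduced to the empty partition by successive
removals of `t`-rim hooks. -/
def TDecomposable (t : ℕ) (μ : YoungDiagram) : Prop :=
  Relation.ReflTransGen (RemoveHook t) μ ⊥

/-- The hook length of the cell `c` of `μ`. -/
def hookLen (μ : YoungDiagram) (c : ℕ × ℕ) : ℕ :=
  μ.rowLen c.1 + μ.colLen c.2 - c.1 - c.2 - 1

/-- The β-set of `μ` with `l` elements: `{μ_i − i + l : 1 ≤ i ≤ l}`. -/
def betaSet (μ : YoungDiagram) (l : ℕ) : Finset ℕ :=
  (Finset.range l).image (fun i => μ.rowLen i + l - (i + 1))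

/-- The set `Q_r` of the context: the elements of the β-set `B_{t·l}(μ)` congruent to `r`
mod `t` are `{t·b + r : b ∈ Q_r}`. -/
def quotientSet (t l : ℕ) (μ : YoungDiagram) (r : ℕ) : Finset ℕ :=
  ((betaSet μ (t * l)).filter (fun x => x % t = r)).image (fun x => x / t)

/-- `Q` is the `r`-th `t`-quotient of `μ`: the partition whose β-set with `|Q_r|` elements
is `Q_r` (this is independent of the choice of `l`). -/
def IsQuotient (t : ℕ) (μ : YoungDiagram) (r : ℕ) (Q : YoungDiagram) : Prop :=
  ∃ l, μ.colLen 0 ≤ t * l ∧ betaSet Q (quotientSet t l μ r).card = quotientSet t l μ r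

/-- `RemoveCell μ ν` : `ν` is obtained from `μ` by removing a single cell. -/
def RemoveCell (μ ν : YoungDiagram) : Prop :=
  ν.cells ⊆ μ.cells ∧ μ.card = ν.card + 1

/-- A chain of partitions from `top` down to `bot`, each step removing a `t`-rim hook,
encoded as a list. -/
def IsHookChain (t : ℕ) (top bot : YoungDiagram) (L : List YoungDiagram) : Prop :=
  L.head? = some top ∧ L.getLast? = some bot ∧ L.Chain' (RemoveHook t)

/-- The number of `t`-rim hook tableaux of the skew shape `top ∖ bot`. -/
noncomputable def numRimHookTableaux (t : ℕ) (top bot : YoungDiagram) : ℕ :=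
  Set.ncard {L : List YoungDiagram | IsHookChain t top bot L}

/-- The number of standard Young tableaux of the skew shape `top ∖ bot`. -/
noncomputable def dimSkew (top bot : YoungDiagram) : ℕ :=
  Set.ncard {L : List YoungDiagram | L.head? = some top ∧ L.getLast? = some bot ∧
    L.Chain' RemoveCell}

/-- The number of standard Young tableaux of shape `μ`. -/
noncomputable def dimSYT (μ : YoungDiagram) : ℕ := dimSkew μ ⊥

/-- The height of a set of cells: the number of rows it meets. -/
def cellsHeight (s : Finset (ℕ × ℕ)) : ℕ := (s.image Prod.fst).card

/-- The sign of a chain of rim-hook removals: the product of `(−1)^{ht − 1}` over the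
removed hooks. -/
def hookSign (L : List YoungDiagram) : ℤ :=
  ((L.zip L.tail).map (fun p => (-1 : ℤ) ^ (cellsHeight (p.1.cells \ p.2.cells) - 1))).prod

/-! Put the β-set of a partition (with `n` beads, `n` at least its number of rows) on a `t`-runner
abacus and count the pairs of beads `a < b` with `b` on an earlier runner (smaller residue mod `t`)
than `a`. Removing a `t`-rim hook of height `h` slides a single bead from `x` to `x - t` along its
runner, past exactly `h - 1` beads, and changes that count by `h - 1` modulo `2`. So the sign of
any chain of rim-hook removals from `λ` down to `∅` is the product of the signs `(-1) ^ abacusInv`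
of `λ` and of `∅`, which only depends on `λ`. -/

open Finset

def abacusInv (t : ℕ) (B : Finset ℕ) : ℕ :=
  ∑ a ∈ B, ∑ b ∈ B, if a < b ∧ b % t < a % t then 1 else 0

theorem abacusInv_insert {t y : ℕ} {C : Finset ℕ} (hy : y ∉ C) :
    abacusInv t (insert y C) = abacusInv t C +
      ∑ b ∈ C, ((if y < b ∧ b % t < y % t then 1 else 0) +
        if b < y ∧ y % t < b % t then 1 else 0) := by
  simp only [abacusInv, sum_insert hy, lt_irrefl, false_and, if_false, zero_add, sum_add_distrib]
  ring

theorem mod_ne_mod_of_sub_lt_of_lt {t b x : ℕ} (h₁ : x - t < b) (h₂ : b < x) : b % t ≠ x % t := by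
  intro h
  have : t ≤ x - b := Nat.le_of_dvd (by omega) ((Nat.modEq_iff_dvd' h₂.le).mp h)
  omega

theorem neg_one_pow_abacusInv_insert_sub_erase {t x : ℕ} {B : Finset ℕ} (hx : x ∈ B) (htx : t ≤ x)
    (hxt : x - t ∉ B) :
    (-1 : ℤ) ^ abacusInv t (insert (x - t) (B.erase x)) =
      (-1) ^ abacusInv t B * (-1) ^ #{b ∈ B | x - t < b ∧ b < x} := by
  set C := B.erase x
  have hxC : x ∉ C := notMem_erase x B
  have hxtC : x - t ∉ C := fun h => hxt (mem_of_mem_erase h)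
  have hmod : (x - t) % t = x % t := (Nat.mod_eq_sub_mod htx).symm
  have hbetween : #{b ∈ B | x - t < b ∧ b < x} = #{b ∈ C | x - t < b ∧ b < x} := by
    rw [← insert_erase hx, filter_insert, if_neg (by omega)]
  rw [hbetween, ← insert_erase hx, abacusInv_insert hxC, abacusInv_insert hxtC, card_filter,
    pow_add, pow_add, mul_assoc, ← prod_pow_eq_pow_sum, ← prod_pow_eq_pow_sum,
    ← prod_pow_eq_pow_sum, ← prod_mul_distrib, hmod]
  congr 1
  -- A bead strictly between `x - t` and `x` lies on another runner, so it is inverted with exactly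
  -- one of the two positions of the moving bead; any other bead, with both or with neither.
  refine prod_congr rfl fun b hb => ?_
  have hbx : b ≠ x := ne_of_mem_of_not_mem hb hxC
  have hbxt : b ≠ x - t := ne_of_mem_of_not_mem hb hxtC
  have hres : x - t < b → b < x → b % t ≠ x % t := mod_ne_mod_of_sub_lt_of_lt
  split_ifs <;> omega

def abacusSign (t : ℕ) (μ : YoungDiagram) (n : ℕ) : ℤ := (-1) ^ abacusInv t (betaSet μ n)

theorem abacusSign_mul_self (t : ℕ) (μ : YoungDiagram) (n : ℕ) :
    abacusSign t μ n * abacusSign t μ n = 1 := by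
  rw [abacusSign, ← mul_pow]
  norm_num

theorem sum_Icc_tsub_add_of_add_one_eq {f g : ℕ → ℕ} (hf : Antitone f) {i j : ℕ} (hij : i ≤ j)
    (hj : g j ≤ f j) (hsucc : ∀ r, i ≤ r → r < j → g r + 1 = f (r + 1)) :
    ∑ r ∈ Icc i j, (f r - g r) + g j + i = f i + j := by
  induction j, hij using Nat.le_induction with
  | base => simp only [Icc_self, sum_singleton]; omega
  | succ j hij ih =>
    have hstep := hsucc j hij j.lt_add_one
    have hanti := hf (Nat.le_add_right j 1)
    have := ih (by omega) fun r h₁ h₂ => hsucc r h₁ (by omega)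
    rw [sum_Icc_succ_top (by omega)]
    omega

theorem CellsConnected.exists_vertical_pair {S : Finset (ℕ × ℕ)} (hS : CellsConnected S)
    {a b : ℕ × ℕ} (ha : a ∈ S) (hb : b ∈ S) {r : ℕ} (har : a.1 ≤ r) (hrb : r < b.1) :
    ∃ c, (r, c) ∈ S ∧ (r + 1, c) ∈ S := by
  have hpath := hS a ha b hb
  clear ha
  induction hpath using Relation.ReflTransGen.head_induction_on with
  | refl => omega
  | @head x y hxy _ ih =>
    obtain ⟨hx, hy, hadj⟩ := hxy
    by_cases hyr : y.1 ≤ r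
    · exact ih hyr
    · obtain ⟨x₁, x₂⟩ := x
      obtain ⟨y₁, y₂⟩ := y
      simp only [CellAdj] at hadj har hyr
      obtain ⟨rfl, rfl, rfl⟩ : x₁ = r ∧ y₁ = r + 1 ∧ y₂ = x₂ := by omega
      exact ⟨y₂, hx, hy⟩

namespace YoungDiagram

theorem mem_cells_sdiff_iff {μ ν : YoungDiagram} {r q : ℕ} :
    (r, q) ∈ μ.cells \ ν.cells ↔ ν.rowLen r ≤ q ∧ q < μ.rowLen r := by
  rw [mem_sdiff, mem_cells, mem_cells, mem_iff_lt_rowLen, mem_iff_lt_rowLen, not_lt, and_comm]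

theorem rowLen_le_rowLen {μ ν : YoungDiagram} (h : ν ≤ μ) (r : ℕ) : ν.rowLen r ≤ μ.rowLen r := by
  by_contra! hc
  exact (mem_iff_lt_rowLen.mp (h (mem_iff_lt_rowLen.mpr hc))).false

theorem colLen_le_colLen {μ ν : YoungDiagram} (h : ν ≤ μ) (c : ℕ) : ν.colLen c ≤ μ.colLen c := by
  by_contra! hc
  exact (mem_iff_lt_colLen.mp (h (mem_iff_lt_colLen.mpr hc))).false

theorem mem_image_fst_cells_sdiff {μ ν : YoungDiagram} {r : ℕ} :
    r ∈ (μ.cells \ ν.cells).image Prod.fst ↔ ν.rowLen r < μ.rowLen r := by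
  constructor
  · intro hr
    obtain ⟨⟨r, q⟩, hq, rfl⟩ := mem_image.mp hr
    have := mem_cells_sdiff_iff.mp hq
    exact this.1.trans_lt this.2
  · exact fun h => mem_image.mpr ⟨(r, ν.rowLen r), mem_cells_sdiff_iff.mpr ⟨le_rfl, h⟩, rfl⟩

theorem card_cells_sdiff_eq_sum {μ ν : YoungDiagram} {R : Finset ℕ}
    (hR : ∀ c ∈ μ.cells \ ν.cells, c.1 ∈ R) :
    #(μ.cells \ ν.cells) = ∑ r ∈ R, (μ.rowLen r - ν.rowLen r) := by
  rw [card_eq_sum_card_fiberwise hR]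
  refine sum_congr rfl fun r _ => ?_
  have hrow : {c ∈ μ.cells \ ν.cells | c.1 = r} = {r} ×ˢ Ico (ν.rowLen r) (μ.rowLen r) := by
    ext ⟨r', q⟩
    simp only [mem_filter, mem_cells_sdiff_iff, mem_product, mem_singleton, mem_Ico]
    constructor
    · rintro ⟨hq, rfl⟩
      exact ⟨rfl, hq⟩
    · rintro ⟨rfl, hq⟩
      exact ⟨hq, rfl⟩
  rw [hrow, card_product, card_singleton, one_mul, Nat.card_Ico]

def bead (μ : YoungDiagram) (n r : ℕ) : ℕ := μ.rowLen r + n - (r + 1)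

theorem betaSet_eq_image_bead (μ : YoungDiagram) (n : ℕ) :
    betaSet μ n = (range n).image (μ.bead n) := rfl

theorem strictAntiOn_bead (μ : YoungDiagram) (n : ℕ) : StrictAntiOn (μ.bead n) (Set.Iio n) := by
  intro r _ s hs hrs
  have := μ.rowLen_anti r s hrs.le
  simp only [Set.mem_Iio] at hs
  simp only [bead]
  omega

theorem mem_betaSet {μ : YoungDiagram} {n y : ℕ} : y ∈ betaSet μ n ↔ ∃ r < n, μ.bead n r = y := by
  simp [betaSet_eq_image_bead]

theorem card_betaSet (μ : YoungDiagram) (n : ℕ) : #(betaSet μ n) = n := by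
  rw [betaSet_eq_image_bead, card_image_of_injOn, card_range]
  simpa only [coe_range] using (strictAntiOn_bead μ n).injOn

/-- The skew shape `μ ∖ ν` is a rim hook occupying rows `i` to `j`, in terms of row lengths: the
other rows are untouched, and consecutive rows of the hook share exactly one column. -/
structure IsRimHookOnRows (μ ν : YoungDiagram) (i j : ℕ) : Prop where
  le : i ≤ j
  rowLen_of_lt : ∀ r < i, ν.rowLen r = μ.rowLen r
  rowLen_of_gt : ∀ r, j < r → ν.rowLen r = μ.rowLen r
  rowLen_succ : ∀ r, i ≤ r → r < j → ν.rowLen r + 1 = μ.rowLen (r + 1)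
  rowLen_lt : ν.rowLen j < μ.rowLen j

namespace IsRimHookOnRows

variable {μ ν : YoungDiagram} {i j n : ℕ}

theorem rowLen_lt_iff (h : IsRimHookOnRows μ ν i j) {r : ℕ} :
    ν.rowLen r < μ.rowLen r ↔ i ≤ r ∧ r ≤ j := by
  constructor
  · intro hlt
    by_contra hr
    rcases not_and_or.mp hr with hr | hr
    · exact hlt.ne (h.rowLen_of_lt r (not_le.mp hr))
    · exact hlt.ne (h.rowLen_of_gt r (not_le.mp hr))
  · rintro ⟨hir, hrj⟩
    rcases hrj.lt_or_eq with hrj | rfl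
    · have := h.rowLen_succ r hir hrj
      have := μ.rowLen_anti r (r + 1) (Nat.le_succ r)
      omega
    · exact h.rowLen_lt

theorem image_fst_eq (h : IsRimHookOnRows μ ν i j) :
    (μ.cells \ ν.cells).image Prod.fst = Icc i j := by
  ext r
  rw [mem_image_fst_cells_sdiff, h.rowLen_lt_iff, mem_Icc]

theorem cellsHeight_eq (h : IsRimHookOnRows μ ν i j) :
    cellsHeight (μ.cells \ ν.cells) = j - i + 1 := by
  rw [cellsHeight, h.image_fst_eq, Nat.card_Icc]
  have := h.le
  omega

theorem card_add (h : IsRimHookOnRows μ ν i j) :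
    #(μ.cells \ ν.cells) + ν.rowLen j + i = μ.rowLen i + j := by
  rw [card_cells_sdiff_eq_sum fun c hc => h.image_fst_eq ▸ mem_image_of_mem Prod.fst hc]
  exact sum_Icc_tsub_add_of_add_one_eq (fun a b hab => μ.rowLen_anti a b hab) h.le
    h.rowLen_lt.le h.rowLen_succ

theorem bead_of_lt (h : IsRimHookOnRows μ ν i j) {r : ℕ} (hr : r < i) : ν.bead n r = μ.bead n r := by
  rw [bead, bead, h.rowLen_of_lt r hr]

theorem bead_of_gt (h : IsRimHookOnRows μ ν i j) {r : ℕ} (hr : j < r) : ν.bead n r = μ.bead n r := by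
  rw [bead, bead, h.rowLen_of_gt r hr]

theorem bead_of_le_of_lt (h : IsRimHookOnRows μ ν i j) {r : ℕ} (hir : i ≤ r) (hrj : r < j) :
    ν.bead n r = μ.bead n (r + 1) := by
  have := h.rowLen_succ r hir hrj
  simp only [bead]
  omega

theorem bead_last_add_card (h : IsRimHookOnRows μ ν i j) (hjn : j < n) :
    ν.bead n j + #(μ.cells \ ν.cells) = μ.bead n i := by
  have := h.card_add
  have := h.le
  simp only [bead]
  omega

theorem bead_sub_card (h : IsRimHookOnRows μ ν i j) (hjn : j < n) :
    μ.bead n i - #(μ.cells \ ν.cells) = ν.bead n j := by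
  rw [← h.bead_last_add_card hjn, Nat.add_sub_cancel]

theorem bead_last_lt (h : IsRimHookOnRows μ ν i j) (hjn : j < n) : ν.bead n j < μ.bead n j := by
  have := h.rowLen_lt
  simp only [bead]
  omega

theorem bead_sub_card_notMem (h : IsRimHookOnRows μ ν i j) (hjn : j < n) :
    μ.bead n i - #(μ.cells \ ν.cells) ∉ betaSet μ n := by
  rw [h.bead_sub_card hjn, mem_betaSet]
  rintro ⟨r, hrn, hr⟩
  rcases le_or_gt r j with hrj | hjr
  · have := (strictAntiOn_bead μ n).antitoneOn hrn hjn hrj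
    have := h.bead_last_lt hjn
    omega
  · have := (strictAntiOn_bead ν n) hjn hrn hjr
    rw [h.bead_of_gt hjr] at this
    omega

theorem betaSet_eq (h : IsRimHookOnRows μ ν i j) (hjn : j < n) :
    betaSet ν n =
      insert (μ.bead n i - #(μ.cells \ ν.cells)) ((betaSet μ n).erase (μ.bead n i)) := by
  have hin : i < n := h.le.trans_lt hjn
  have hmem : ∀ s < n, s ≠ i → μ.bead n s ∈ (betaSet μ n).erase (μ.bead n i) := fun s hs hsi =>
    mem_erase.mpr ⟨fun he => hsi ((strictAntiOn_bead μ n).injOn hs hin he),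
      mem_betaSet.mpr ⟨s, hs, rfl⟩⟩
  refine eq_of_subset_of_card_le (fun y hy => ?_) ?_
  · obtain ⟨r, hrn, rfl⟩ := mem_betaSet.mp hy
    rcases lt_or_ge r i with hri | hir
    · exact mem_insert_of_mem (h.bead_of_lt hri ▸ hmem r hrn hri.ne)
    rcases lt_trichotomy r j with hrj | rfl | hjr
    · exact mem_insert_of_mem (h.bead_of_le_of_lt hir hrj ▸ hmem (r + 1) (by omega) (by omega))
    · exact h.bead_sub_card hjn ▸ mem_insert_self _ _
    · exact mem_insert_of_mem (h.bead_of_gt hjr ▸ hmem r hrn (h.le.trans_lt hjr).ne')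
  · rw [card_insert_of_notMem (fun hx => h.bead_sub_card_notMem hjn (mem_of_mem_erase hx)),
      card_erase_of_mem (mem_betaSet.mpr ⟨i, hin, rfl⟩), card_betaSet, card_betaSet]
    omega

theorem card_beads_between (h : IsRimHookOnRows μ ν i j) (hjn : j < n) :
    #{b ∈ betaSet μ n | μ.bead n i - #(μ.cells \ ν.cells) < b ∧ b < μ.bead n i} = j - i := by
  have hin : i < n := h.le.trans_lt hjn
  have hanti := strictAntiOn_bead μ n
  suffices hrows : {r ∈ range n | μ.bead n i - #(μ.cells \ ν.cells) < μ.bead n r ∧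
      μ.bead n r < μ.bead n i} = Ioc i j by
    rw [betaSet_eq_image_bead, filter_image, hrows, card_image_of_injOn, Nat.card_Ioc]
    exact hanti.injOn.mono fun r hr => (mem_Ioc.mp hr).2.trans_lt hjn
  rw [h.bead_sub_card hjn]
  ext r
  simp only [mem_filter, mem_range, mem_Ioc]
  constructor
  · rintro ⟨hrn, hlast, hfirst⟩
    refine ⟨(hanti.lt_iff_gt hrn hin).mp hfirst, not_lt.mp fun hjr => ?_⟩
    have := (strictAntiOn_bead ν n) hjn hrn hjr
    rw [h.bead_of_gt hjr] at this
    omega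
  · rintro ⟨hir, hrj⟩
    have hrn : r < n := hrj.trans_lt hjn
    exact ⟨hrn, (h.bead_last_lt hjn).trans_le (hanti.antitoneOn hrn hjn hrj),
      hanti hin hrn hir⟩

end IsRimHookOnRows

end YoungDiagram

open YoungDiagram

namespace RemoveHook

variable {t : ℕ} {μ ν : YoungDiagram}

theorem rowLen_add_one_of_vertical_pair (h : RemoveHook t μ ν) {r c : ℕ}
    (h₁ : (r, c) ∈ μ.cells \ ν.cells) (h₂ : (r + 1, c) ∈ μ.cells \ ν.cells) :
    ν.rowLen r + 1 = μ.rowLen (r + 1) := by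
  rw [mem_cells_sdiff_iff] at h₁ h₂
  have hanti := μ.rowLen_anti r (r + 1) (Nat.le_succ r)
  have hrim : (r + 1, ν.rowLen r + 1) ∉ μ :=
    h.2.2.1 (r, ν.rowLen r) (mem_cells_sdiff_iff.mpr ⟨le_rfl, by omega⟩)
  rw [mem_iff_lt_rowLen] at hrim
  omega

theorem exists_isRimHookOnRows (h : RemoveHook t μ ν) (ht : 0 < t) :
    ∃ i j, IsRimHookOnRows μ ν i j := by
  set S := μ.cells \ ν.cells
  have hne : S.Nonempty := card_pos.mp (h.2.1 ▸ ht)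
  obtain ⟨a, ha, hmin⟩ := S.exists_min_image Prod.fst hne
  obtain ⟨⟨j, c⟩, hb, hmax⟩ := S.exists_max_image Prod.fst hne
  have hout : ∀ r, r < a.1 ∨ j < r → ν.rowLen r = μ.rowLen r := by
    intro r hr
    refine (rowLen_le_rowLen (cells_subset_iff.mp h.1) r).antisymm (not_lt.mp fun hlt => ?_)
    have hc : (r, ν.rowLen r) ∈ S := mem_cells_sdiff_iff.mpr ⟨le_rfl, hlt⟩
    have := hmin _ hc
    have := hmax _ hc
    omega
  refine ⟨a.1, j, hmin _ hb, fun r hr => hout r (Or.inl hr), fun r hr => hout r (Or.inr hr),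
    fun r h₁ h₂ => ?_, ?_⟩
  · obtain ⟨c, hc₁, hc₂⟩ := h.2.2.2.exists_vertical_pair ha hb h₁ h₂
    exact h.rowLen_add_one_of_vertical_pair hc₁ hc₂
  · have := mem_cells_sdiff_iff.mp hb
    omega

theorem abacusSign_eq {n : ℕ} (h : RemoveHook t μ ν) (hn : μ.colLen 0 ≤ n) :
    abacusSign t ν n = abacusSign t μ n * (-1) ^ (cellsHeight (μ.cells \ ν.cells) - 1) := by
  rcases Nat.eq_zero_or_pos t with rfl | ht
  · obtain rfl : ν = μ := le_antisymm (cells_subset_iff.mp h.1)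
      (cells_subset_iff.mp (sdiff_eq_empty_iff_subset.mp (card_eq_zero.mp h.2.1)))
    simp [cellsHeight]
  obtain ⟨i, j, hrows⟩ := h.exists_isRimHookOnRows ht
  have hjn : j < n :=
    (mem_iff_lt_colLen.mp (mem_iff_lt_rowLen.mpr (Nat.zero_lt_of_lt hrows.rowLen_lt))).trans_le hn
  have hhook : #(μ.cells \ ν.cells) ≤ μ.bead n i :=
    (hrows.bead_last_add_card hjn).le.trans' le_add_self
  obtain rfl : #(μ.cells \ ν.cells) = t := h.2.1
  rw [abacusSign, abacusSign, hrows.betaSet_eq hjn,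
    neg_one_pow_abacusInv_insert_sub_erase (mem_betaSet.mpr ⟨i, hrows.le.trans_lt hjn, rfl⟩)
      hhook (hrows.bead_sub_card_notMem hjn), hrows.card_beads_between hjn, hrows.cellsHeight_eq,
    Nat.add_sub_cancel]

end RemoveHook

theorem hookSign_cons_cons (a b : YoungDiagram) (L : List YoungDiagram) :
    hookSign (a :: b :: L) = (-1) ^ (cellsHeight (a.cells \ b.cells) - 1) * hookSign (b :: L) := by
  simp [hookSign]

theorem IsHookChain.hookSign_eq {t n : ℕ} {top bot : YoungDiagram} {L : List YoungDiagram}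
    (hL : IsHookChain t top bot L) (hn : top.colLen 0 ≤ n) :
    hookSign L = abacusSign t top n * abacusSign t bot n := by
  induction L generalizing top with
  | nil => simp [IsHookChain] at hL
  | cons a L ih =>
    obtain ⟨hhead, hlast, hchain⟩ := hL
    obtain rfl : a = top := by simpa using hhead
    cases L with
    | nil =>
      obtain rfl : a = bot := by simpa using hlast
      rw [abacusSign_mul_self]
      rfl
    | cons b L =>
      obtain ⟨hab, hchain⟩ := List.isChain_cons_cons.mp hchain
      have hb := ih ⟨rfl, by simpa using hlast, hchain⟩
        ((colLen_le_colLen (cells_subset_iff.mp hab.1) 0).trans hn)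
      have hε : ((-1 : ℤ) ^ (cellsHeight (a.cells \ b.cells) - 1)) ^ 2 = 1 := by
        rw [← pow_mul, pow_mul']
        norm_num
      rw [hookSign_cons_cons, hb, hab.abacusSign_eq hn]
      linear_combination abacusSign t a n * abacusSign t bot n * hε

theorem rim_hook_tableau_sign_invariant_general (t : ℕ) (lam : YoungDiagram)
    (L₁ L₂ : List YoungDiagram)
    (h₁ : IsHookChain t lam ⊥ L₁) (h₂ : IsHookChain t lam ⊥ L₂) :
    hookSign L₁ = hookSign L₂ := by
  rw [h₁.hookSign_eq le_rfl, h₂.hookSign_eq le_rfl]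

/-- **All `t`-rim hook tableaux of a `t`-decomposable partition have the same sign:** the
product of `(−1)^{ht(ν) − 1}` over the removed hooks is independent of the tableau. -/
theorem rim_hook_tableau_sign_invariant (t : ℕ) (ht : 1 ≤ t) (lam : YoungDiagram)
    (hdec : TDecomposable t lam) (L₁ L₂ : List YoungDiagram)
    (h₁ : IsHookChain t lam ⊥ L₁) (h₂ : IsHookChain t lam ⊥ L₂) :
    hookSign L₁ = hookSign L₂ :=
  rim_hook_tableau_sign_invariant_general t lam L₁ L₂ h₁ h₂
end

section
/- Fix an integer N ≥ 3. Define rational numbers m_N(k,l) for integers k,l ≥ 0 by m_N(k,l) = 𝔟(k)·𝔠(l)·v(k,l), with 𝔟, 𝔠, v as in the context. Let λ be a partition, let n be a multiple of N with n at least the number of parts of λ, let b_1 > b_2 > ⋯ > b_n be the elements of the β-set B_n(λ), and let M(λ) be the n × n matrix with (i,j)-entry m_N(b_i, b_j). If det M(λ) ≠ 0, then each residue class modulo N contains exactly n/N of the elements b_1, …, b_n; equivalently, λ is N-decomposable. -/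
open scoped BigOperators

/-- `𝔟(k)`: the product of all `r ∈ {1,…,k}` with `r ≡ −1 (mod N)` divided by the product of
all `r ∈ {1,…,k}` with `r ≡ 0 (mod N)`. -/
noncomputable def bFrak (N k : ℕ) : ℚ :=
  (∏ r ∈ (Finset.Icc 1 k).filter (fun r => r % N = N - 1), (r : ℚ)) /
    (∏ r ∈ (Finset.Icc 1 k).filter (fun r => r % N = 0), (r : ℚ))

/-- `𝔠(l)`: the product of all `r ∈ {1,…,l}` with `r ≡ 1 (mod N)` divided by the product of
all `r ∈ {1,…,l}` with `r ≡ 0 (mod N)`. -/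
noncomputable def cFrak (N l : ℕ) : ℚ :=
  (∏ r ∈ (Finset.Icc 1 l).filter (fun r => r % N = 1), (r : ℚ)) /
    (∏ r ∈ (Finset.Icc 1 l).filter (fun r => r % N = 0), (r : ℚ))

/-- `v(k,l)`: `1/(l − k)` if `k ≡ l + 1 (mod N)`; `1` if `k ≡ 0` and `k ≢ l + 1 (mod N)`;
`0` otherwise. -/
noncomputable def vEntry (N k l : ℕ) : ℚ :=
  if k % N = (l + 1) % N then ((l : ℚ) - (k : ℚ))⁻¹
  else if k % N = 0 then 1 else 0

/-- The matrix entry `m_N(k,l) = 𝔟(k)·𝔠(l)·v(k,l)`. -/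
noncomputable def mEntry (N k l : ℕ) : ℚ := bFrak N k * cFrak N l * vEntry N k l

/-! The rows of `M(λ)` with `b_i ≡ 0 (mod N)` are proportional away from the columns with
`b_j ≡ -1`, so clearing all but one of them against that one leaves a matrix with the same nonzero
determinant, hence a permutation `σ` with every entry `(i, σ i)` nonzero. Off the kept row, `v` then
forces `b_{σ i} ≡ b_i - 1`; summing over `i` and using `N ∣ n` shows that the kept row obeys the
same rule, so `σ` maps each residue class onto the previous one and all classes have `n / N`
elements.

A balanced β-set of a nonempty partition contains some `x ≥ N` with `x - N` missing (otherwise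
it would be `{0, …, n - 1}`). Replacing `x` by `x - N` removes an `N`-rim hook and keeps the
β-set balanced, so induction on `|λ|` reaches the empty partition. -/

open Finset

theorem Matrix.exists_perm_forall_ne_zero_of_det_ne_zero {n R : Type*} [Fintype n]
    [DecidableEq n] [CommRing R] {M : Matrix n n R} (h : M.det ≠ 0) :
    ∃ σ : Equiv.Perm n, ∀ i, M i (σ i) ≠ 0 := by
  rw [← det_transpose, det_apply'] at h
  by_contra! hc
  refine h (sum_eq_zero fun σ _ => ?_)
  obtain ⟨i, hi⟩ := hc σ
  rw [prod_eq_zero (mem_univ i) (by simpa using hi), mul_zero]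

section Residues

variable {ι : Type*} [Fintype ι] {N : ℕ}

theorem card_filter_eq_add_one_eq (σ : Equiv.Perm ι) (g : ι → ZMod N)
    (h : ∀ i, g (σ i) = g i - 1) (s : ZMod N) :
    #{i | g i = s + 1} = #{i | g i = s} :=
  card_equiv σ fun i => by simp [h, sub_eq_iff_eq_add]

theorem card_filter_eq_div_of_forall_eq_sub_one [NeZero N] (σ : Equiv.Perm ι)
    (g : ι → ZMod N) (h : ∀ i, g (σ i) = g i - 1) (s : ZMod N) :
    #{i | g i = s} = Fintype.card ι / N := by
  have hconst : ∀ s, #{i | g i = s} = #{i | g i = 0} := by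
    intro s
    rw [← ZMod.natCast_zmod_val s]
    induction s.val with
    | zero => simp
    | succ k ih => rw [Nat.cast_succ, card_filter_eq_add_one_eq σ g h, ih]
  have hcard : Fintype.card ι = N * #{i | g i = 0} := by
    rw [← card_univ,
      card_eq_sum_card_fiberwise (f := g) (t := univ) fun _ _ => mem_coe.2 (mem_univ _)]
    simp [hconst]
  rw [hconst, hcard, Nat.mul_div_cancel_left _ (NeZero.pos N)]

/-- `∑ i, (g (σ i) - g i) = 0`, all terms but one are `-1`, and `card ι = 0` in `ZMod N`. -/
theorem eq_sub_one_of_forall_ne (hN : (Fintype.card ι : ZMod N) = 0) (σ : Equiv.Perm ι)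
    (g : ι → ZMod N) (k₀ : ι) (h : ∀ i ≠ k₀, g (σ i) = g i - 1) : g (σ k₀) = g k₀ - 1 := by
  have hsum : ∑ i, (g (σ i) - (g i - 1)) = 0 := by
    simp [sum_sub_distrib, Equiv.sum_comp σ g, hN]
  rw [sum_eq_single k₀ (fun i _ hi => by rw [h i hi, sub_self]) (by simp)] at hsum
  exact sub_eq_zero.1 hsum

end Residues

theorem bFrak_ne_zero (N k : ℕ) : bFrak N k ≠ 0 := by
  refine div_ne_zero ?_ ?_ <;>
  exact prod_ne_zero_iff.2 fun r hr => by
    have := (mem_Icc.1 (mem_filter.1 hr).1).1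
    positivity

theorem vEntry_eq_ite (N k l : ℕ) : vEntry N k l =
    if (k : ZMod N) = l + 1 then ((l : ℚ) - k)⁻¹ else if (k : ZMod N) = 0 then 1 else 0 := by
  simp only [vEntry, ← Nat.cast_succ, ← Nat.cast_zero (R := ZMod N),
    ZMod.natCast_eq_natCast_iff', Nat.zero_mod]

theorem natCast_eq_add_one_of_mEntry_ne_zero {N k l : ℕ} (hk : (k : ZMod N) ≠ 0)
    (h : mEntry N k l ≠ 0) : (k : ZMod N) = l + 1 := by
  by_contra hkl
  simp [mEntry, vEntry_eq_ite, hkl, hk] at h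

theorem mEntry_of_natCast_eq_zero {N k l : ℕ} (hk : (k : ZMod N) = 0)
    (hl : (l : ZMod N) + 1 ≠ 0) : mEntry N k l = bFrak N k * cFrak N l := by
  rw [mEntry, vEntry_eq_ite, if_neg (hk ▸ hl.symm), if_pos hk, mul_one]

theorem card_filter_mod_eq_div_of_det_ne_zero {ι : Type*} [Fintype ι] [DecidableEq ι] {N : ℕ}
    [NeZero N] (hn : N ∣ Fintype.card ι) (b : ι → ℕ)
    (hdet : (Matrix.of fun i j => mEntry N (b i) (b j)).det ≠ 0) (r : ℕ) (hr : r < N) :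
    #{i | b i % N = r} = Fintype.card ι / N := by
  cases isEmpty_or_nonempty ι
  · simp
  set g : ι → ZMod N := fun i => b i
  obtain ⟨k₀, hk₀⟩ : ∃ k₀, ∀ i, g i = 0 → g k₀ = 0 := by
    by_cases h : ∃ i, g i = 0
    · obtain ⟨i, hi⟩ := h
      exact ⟨i, fun _ _ => hi⟩
    · exact ⟨Classical.arbitrary ι, fun i hi => (h ⟨i, hi⟩).elim⟩
  set M : Matrix ι ι ℚ := Matrix.of fun i j => mEntry N (b i) (b j)
  set c : ι → ℚ := fun i => if g i = 0 ∧ i ≠ k₀ then -(bFrak N (b i) / bFrak N (b k₀)) else 0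
  set A : Matrix ι ι ℚ := Matrix.of fun i j => M i j + c i * M k₀ j
  have hA : A.det = M.det :=
    Matrix.det_eq_of_forall_row_eq_smul_add_const c k₀ (by simp [c]) fun _ _ => rfl
  obtain ⟨σ, hσ⟩ := Matrix.exists_perm_forall_ne_zero_of_det_ne_zero (hA ▸ hdet)
  have hstep : ∀ i ≠ k₀, g (σ i) = g i - 1 := by
    intro i hi
    rw [eq_sub_iff_add_eq]
    by_cases hgi : g i = 0
    · by_contra hne
      refine hσ i ?_
      simp only [A, M, c, Matrix.of_apply, if_pos (And.intro hgi hi)]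
      rw [mEntry_of_natCast_eq_zero hgi (hgi ▸ hne),
        mEntry_of_natCast_eq_zero (hk₀ i hgi) (hgi ▸ hne)]
      field_simp [bFrak_ne_zero]
      ring
    · exact (natCast_eq_add_one_of_mEntry_ne_zero hgi (by simpa [A, M, c, hgi] using hσ i)).symm
  have hperm : ∀ i, g (σ i) = g i - 1 := fun i => by
    by_cases hi : i = k₀
    · exact hi ▸ eq_sub_one_of_forall_ne ((ZMod.natCast_eq_zero_iff _ _).2 hn) σ g k₀ hstep
    · exact hstep i hi
  rw [← card_filter_eq_div_of_forall_eq_sub_one σ g hperm r]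
  congr! 2 with i
  rw [ZMod.natCast_eq_natCast_iff', Nat.mod_eq_of_lt hr]

namespace YoungDiagram

theorem rowLen_eq_zero_of_colLen_le {μ : YoungDiagram} {r : ℕ} (h : μ.colLen 0 ≤ r) :
    μ.rowLen r = 0 := by
  by_contra h0
  have := mem_iff_lt_colLen.1 (mem_iff_lt_rowLen.2 (Nat.pos_of_ne_zero h0))
  omega

theorem eq_bot_of_rowLen_zero_eq_zero {μ : YoungDiagram} (h : μ.rowLen 0 = 0) : μ = ⊥ := by
  ext ⟨r, c⟩
  simp only [cells_bot, Finset.notMem_empty, iff_false, mem_cells]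
  exact fun hc => by simpa [h] using mem_iff_lt_rowLen.1 (μ.up_left_mem (Nat.zero_le r) le_rfl hc)

theorem card_eq_sum_rowLen {μ : YoungDiagram} {n : ℕ} (h : μ.colLen 0 ≤ n) :
    μ.card = ∑ r ∈ range n, μ.rowLen r := by
  rw [YoungDiagram.card, card_eq_sum_card_fiberwise (f := Prod.fst) (t := range n)]
  · exact sum_congr rfl fun r _ => (μ.rowLen_eq_card).symm
  · intro p hp
    have := mem_iff_lt_colLen.1 (μ.up_left_mem le_rfl (Nat.zero_le p.2) ((mem_cells p).1 hp))
    simp only [coe_range, Set.mem_Iio]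
    omega

def restrictRows (μ : YoungDiagram) (g : ℕ → ℕ) (hg : Antitone g) : YoungDiagram where
  cells := {p ∈ μ.cells | p.2 < g p.1}
  isLowerSet p q hqp hp := by
    rw [coe_filter] at hp ⊢
    exact ⟨μ.isLowerSet hqp hp.1, hqp.2.trans_lt (hp.2.trans_le (hg hqp.1))⟩

section RestrictRows

variable {μ : YoungDiagram} {g : ℕ → ℕ} {hg : Antitone g}

theorem mem_restrictRows {p : ℕ × ℕ} : p ∈ μ.restrictRows g hg ↔ p ∈ μ ∧ p.2 < g p.1 := by
  simp [restrictRows, ← mem_cells]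

theorem restrictRows_le : μ.restrictRows g hg ≤ μ := fun _ hp => (mem_restrictRows.1 hp).1

theorem rowLen_restrictRows {r : ℕ} (h : g r ≤ μ.rowLen r) :
    (μ.restrictRows g hg).rowLen r = g r :=
  eq_of_forall_lt_iff fun c => by
    rw [← mem_iff_lt_rowLen, mem_restrictRows, mem_iff_lt_rowLen]
    exact ⟨And.right, fun hc => ⟨hc.trans_le h, hc⟩⟩

theorem mem_cells_sdiff_restrictRows {p : ℕ × ℕ} :
    p ∈ μ.cells \ (μ.restrictRows g hg).cells ↔ p ∈ μ ∧ g p.1 ≤ p.2 := by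
  simp +contextual [mem_restrictRows]

end RestrictRows

end YoungDiagram

theorem CellAdj.symm {a b : ℕ × ℕ} (h : CellAdj a b) : CellAdj b a := by
  unfold CellAdj at *
  omega

theorem cellsConnected_of_rows {D : Finset (ℕ × ℕ)} {a b : ℕ → ℕ} {i j : ℕ}
    (hD : ∀ r c, (r, c) ∈ D ↔ i ≤ r ∧ r ≤ j ∧ a r ≤ c ∧ c < b r)
    (hlink : ∀ r, i ≤ r → r < j → ∃ c, (r, c) ∈ D ∧ (r + 1, c) ∈ D) : CellsConnected D := by
  set R := fun p q : ℕ × ℕ => p ∈ D ∧ q ∈ D ∧ CellAdj p q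
  have : Std.Symm R := ⟨fun _ _ ⟨hp, hq, h⟩ => ⟨hq, hp, h.symm⟩⟩
  have hright : ∀ r c k, (r, c) ∈ D → (r, c + k) ∈ D →
      Relation.ReflTransGen R (r, c) (r, c + k) := by
    intro r c k hc hck
    induction k with
    | zero => rfl
    | succ k ih =>
      have hk : (r, c + k) ∈ D := by
        rw [hD] at hc hck ⊢
        omega
      exact (ih hk).tail ⟨hk, hck, Or.inl ⟨rfl, Or.inr rfl⟩⟩
  have hrow : ∀ r c c', (r, c) ∈ D → (r, c') ∈ D → Relation.ReflTransGen R (r, c) (r, c') := by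
    intro r c c' hc hc'
    rcases le_total c c' with h | h <;> obtain ⟨k, rfl⟩ := Nat.exists_eq_add_of_le h
    · exact hright r c k hc hc'
    · exact Std.Symm.symm _ _ (hright r c' k hc' hc)
  have hdown : ∀ d r c c', (r, c) ∈ D → (r + d, c') ∈ D →
      Relation.ReflTransGen R (r, c) (r + d, c') := by
    intro d
    induction d with
    | zero => exact hrow
    | succ d ih =>
      intro r c c' hc hc'
      obtain ⟨e, he, he'⟩ := hlink r ((hD r c).1 hc).1 (by have := (hD _ _).1 hc'; omega)
      have hstep : R (r, e) (r + 1, e) := ⟨he, he', Or.inr ⟨rfl, Or.inr rfl⟩⟩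
      rw [show r + (d + 1) = r + 1 + d by omega] at hc' ⊢
      exact ((hrow r c e hc he).tail hstep).trans (ih (r + 1) e c' he' hc')
  rintro ⟨r, c⟩ hp ⟨r', c'⟩ hq
  rcases le_total r r' with h | h <;> obtain ⟨d, rfl⟩ := Nat.exists_eq_add_of_le h
  · exact hdown d r c c' hp hq
  · exact Std.Symm.symm _ _ (hdown d r' c' c hq hp)

/-- The β-number `λ_i - i + n` of the row `r = i - 1` (rows are indexed from `0`). -/
def betaEntry (μ : YoungDiagram) (n r : ℕ) : ℕ := μ.rowLen r + n - (r + 1)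

theorem betaSet_eq_image (μ : YoungDiagram) (n : ℕ) :
    betaSet μ n = (range n).image (betaEntry μ n) :=
  rfl

theorem betaEntry_lt_betaEntry {μ : YoungDiagram} {n r s : ℕ} (hrs : r < s) (hs : s < n) :
    betaEntry μ n s < betaEntry μ n r := by
  have := μ.rowLen_anti r s hrs.le
  unfold betaEntry
  omega

theorem betaEntry_injOn (μ : YoungDiagram) (n : ℕ) : Set.InjOn (betaEntry μ n) (range n) := by
  intro r hr s hs h
  simp only [coe_range, Set.mem_Iio] at hr hs
  rcases lt_trichotomy r s with hrs | rfl | hrs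
  · exact absurd h (betaEntry_lt_betaEntry hrs hs).ne'
  · rfl
  · exact absurd h (betaEntry_lt_betaEntry hrs hr).ne

theorem mem_betaSet {μ : YoungDiagram} {n x : ℕ} :
    x ∈ betaSet μ n ↔ ∃ r < n, betaEntry μ n r = x := by
  simp [betaSet_eq_image]

theorem card_add_sum_eq_sum_betaSet {μ : YoungDiagram} {n : ℕ} (h : μ.colLen 0 ≤ n) :
    μ.card + ∑ r ∈ range n, (n - (r + 1)) = ∑ x ∈ betaSet μ n, x := by
  rw [betaSet_eq_image, sum_image (betaEntry_injOn μ n), YoungDiagram.card_eq_sum_rowLen h,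
    ← sum_add_distrib]
  refine sum_congr rfl fun r hr => ?_
  have := mem_range.1 hr
  unfold betaEntry
  omega

theorem card_add_eq_of_betaSet_eq {μ ν : YoungDiagram} {n N x : ℕ} (hμ : μ.colLen 0 ≤ n)
    (hν : ν.colLen 0 ≤ n) (hx : x ∈ betaSet μ n) (hxN : N ≤ x) (hxN' : x - N ∉ betaSet μ n)
    (hβ : betaSet ν n = insert (x - N) ((betaSet μ n).erase x)) : ν.card + N = μ.card := by
  have hsum := card_add_sum_eq_sum_betaSet hμ
  have hsumν := card_add_sum_eq_sum_betaSet hν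
  rw [hβ, sum_insert fun h => hxN' (mem_of_mem_erase h)] at hsumν
  rw [← sum_erase_add _ _ hx] at hsum
  omega

theorem div_lt_card_of_forall_sub_mem {T : Finset ℕ} {N : ℕ} (hN : 0 < N)
    (hT : ∀ y ∈ T, N ≤ y → y - N ∈ T) {x : ℕ} (hx : x ∈ T) : x / N < #T := by
  suffices ∀ x ∈ T, x / N < #{y ∈ T | y ≤ x} from (this x hx).trans_le (card_filter_le _ _)
  intro x
  induction x using Nat.strong_induction_on with
  | _ x ih =>
    intro hx
    rcases lt_or_ge x N with hxN | hxN
    · rw [Nat.div_eq_of_lt hxN]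
      exact card_pos.2 ⟨x, mem_filter.2 ⟨hx, le_rfl⟩⟩
    · have hlt := ih (x - N) (by omega) (hT x hx hxN)
      have hsub : insert x {y ∈ T | y ≤ x - N} ⊆ {y ∈ T | y ≤ x} := by
        intro y hy
        rcases mem_insert.1 hy with rfl | hy
        · exact mem_filter.2 ⟨hx, le_rfl⟩
        · exact mem_filter.2 ⟨(mem_filter.1 hy).1, by have := (mem_filter.1 hy).2; omega⟩
      have hcard := card_le_card hsub
      rw [card_insert_of_notMem (by simp; omega)] at hcard
      rw [Nat.div_eq_sub_div hN hxN]
      omega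

def IsBalanced (N n : ℕ) (μ : YoungDiagram) : Prop :=
  ∀ r < N, #{x ∈ betaSet μ n | x % N = r} = n / N

/-- Otherwise each residue class of the β-set is closed under `x ↦ x - N`, which forces all its
elements below `n`; in particular the largest one, `λ_1 + n - 1`. -/
theorem exists_mem_betaSet_sub_notMem {N n : ℕ} {μ : YoungDiagram} (hN : 0 < N)
    (hcol : μ.colLen 0 ≤ n) (hμ : μ ≠ ⊥) (hbal : IsBalanced N n μ) :
    ∃ x ∈ betaSet μ n, N ≤ x ∧ x - N ∉ betaSet μ n := by
  by_contra! hclosed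
  have hrow : 0 < μ.rowLen 0 :=
    Nat.pos_of_ne_zero fun h => hμ (YoungDiagram.eq_bot_of_rowLen_zero_eq_zero h)
  have hn : 0 < n :=
    (YoungDiagram.mem_iff_lt_colLen.1 (YoungDiagram.mem_iff_lt_rowLen.2 hrow)).trans_le hcol
  set x := betaEntry μ n 0
  have hx : x ∈ {y ∈ betaSet μ n | y % N = x % N} :=
    mem_filter.2 ⟨mem_betaSet.2 ⟨0, hn, rfl⟩, rfl⟩
  have hdiv := div_lt_card_of_forall_sub_mem hN (fun y hy hNy => ?_) hx
  · rw [hbal _ (Nat.mod_lt x hN)] at hdiv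
    have := Nat.lt_of_div_lt_div hdiv
    simp only [x, betaEntry] at this
    omega
  · obtain ⟨hyB, hyx⟩ := mem_filter.1 hy
    exact mem_filter.2 ⟨hclosed y hyB hNy, (Nat.sub_modulus_modEq_iff hNy).2 hyx⟩

theorem card_filter_mod_insert_sub_erase {B : Finset ℕ} {N x : ℕ} (hx : x ∈ B) (hxN : N ≤ x)
    (hxN' : x - N ∉ B) (r : ℕ) :
    #{y ∈ insert (x - N) (B.erase x) | y % N = r} = #{y ∈ B | y % N = r} := by
  have hmod : (x - N) % N = x % N := (Nat.sub_modulus_modEq_iff hxN).2 rfl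
  rw [filter_insert, filter_erase, hmod]
  split_ifs with h
  · rw [card_insert_of_notMem fun h' => hxN' (mem_filter.1 (mem_of_mem_erase h')).1,
      card_erase_add_one (mem_filter.2 ⟨hx, h⟩)]
  · rw [erase_eq_of_notMem (s := {y ∈ B | y % N = r}) fun h' => h (mem_filter.1 h').2]

/-- The row lengths left after removing from `μ` the rim hook that runs from the last cell of
row `i` down to the cell `(j, c)`. -/
def hookRows (μ : YoungDiagram) (i j c r : ℕ) : ℕ :=
  if r < i ∨ j < r then μ.rowLen r else if r < j then μ.rowLen (r + 1) - 1 else c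

section HookRemoval

variable {μ : YoungDiagram} {i j c : ℕ}

theorem hookRows_le (hc : c < μ.rowLen j) (r : ℕ) : hookRows μ i j c r ≤ μ.rowLen r := by
  have := μ.rowLen_anti r (r + 1) r.le_succ
  have : r = j → c ≤ μ.rowLen r := by rintro rfl; exact hc.le
  unfold hookRows
  split_ifs <;> omega

theorem hookRows_antitone (hc : c < μ.rowLen j) (hc' : μ.rowLen (j + 1) ≤ c) :
    Antitone (hookRows μ i j c) := by
  refine antitone_nat_of_succ_le fun r => ?_
  have := μ.rowLen_anti r (r + 1) r.le_succ
  have := μ.rowLen_anti (r + 1) (r + 1 + 1) (r + 1).le_succ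
  have : r + 1 = j → c < μ.rowLen (r + 1) := by rintro rfl; exact hc
  have : r = j → μ.rowLen (r + 1) ≤ c := by rintro rfl; exact hc'
  have hle := hookRows_le (i := i) hc (r + 1)
  unfold hookRows at hle ⊢
  split_ifs at hle ⊢ <;> omega

def removeRimHook (μ : YoungDiagram) (i j c : ℕ) (hc : c < μ.rowLen j)
    (hc' : μ.rowLen (j + 1) ≤ c) : YoungDiagram :=
  μ.restrictRows (hookRows μ i j c) (hookRows_antitone hc hc')

theorem rowLen_removeRimHook (hc : c < μ.rowLen j) (hc' : μ.rowLen (j + 1) ≤ c) (r : ℕ) :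
    (removeRimHook μ i j c hc hc').rowLen r = hookRows μ i j c r :=
  YoungDiagram.rowLen_restrictRows (hookRows_le hc r)

theorem mem_cells_sdiff_removeRimHook (hc : c < μ.rowLen j) (hc' : μ.rowLen (j + 1) ≤ c)
    (r c' : ℕ) : (r, c') ∈ μ.cells \ (removeRimHook μ i j c hc hc').cells ↔
      i ≤ r ∧ r ≤ j ∧ hookRows μ i j c r ≤ c' ∧ c' < μ.rowLen r := by
  simp only [removeRimHook, YoungDiagram.mem_cells_sdiff_restrictRows,
    YoungDiagram.mem_iff_lt_rowLen]
  by_cases h : r < i ∨ j < r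
  · simp only [hookRows, if_pos h]
    omega
  · omega

theorem removeHook_removeRimHook (hc : c < μ.rowLen j) (hc' : μ.rowLen (j + 1) ≤ c) :
    RemoveHook #(μ.cells \ (removeRimHook μ i j c hc hc').cells) μ
      (removeRimHook μ i j c hc hc') := by
  have hmem := mem_cells_sdiff_removeRimHook (i := i) hc hc'
  refine ⟨YoungDiagram.cells_subset_iff.2 YoungDiagram.restrictRows_le, rfl, ?_, ?_⟩
  · rintro ⟨r, c'⟩ hp
    rw [hmem] at hp
    rw [YoungDiagram.mem_iff_lt_rowLen, not_lt]
    dsimp only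
    have : r = j → μ.rowLen (r + 1) ≤ c := by rintro rfl; exact hc'
    unfold hookRows at hp
    split_ifs at hp <;> omega
  · refine cellsConnected_of_rows hmem fun r hir hrj => ⟨μ.rowLen (r + 1) - 1, ?_, ?_⟩
    all_goals
      have := μ.rowLen_anti (r + 1) j hrj
      have := μ.rowLen_anti r (r + 1) r.le_succ
      have := μ.rowLen_anti (r + 1) (r + 1 + 1) (r + 1).le_succ
      have : r + 1 = j → c < μ.rowLen (r + 1) := by rintro rfl; exact hc
      simp only [hmem, hookRows]
      split_ifs <;> omega

theorem betaEntry_removeRimHook (hc : c < μ.rowLen j) (hc' : μ.rowLen (j + 1) ≤ c) {n : ℕ}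
    (hjn : j < n) (r : ℕ) : betaEntry (removeRimHook μ i j c hc hc') n r =
      if r < i ∨ j < r then betaEntry μ n r
      else if r < j then betaEntry μ n (r + 1) else c + n - (j + 1) := by
  have := μ.rowLen_anti (r + 1) j
  simp only [betaEntry, rowLen_removeRimHook, hookRows]
  split_ifs <;> first | rfl | omega

theorem betaSet_removeRimHook (hc : c < μ.rowLen j) (hc' : μ.rowLen (j + 1) ≤ c) {n : ℕ}
    (hij : i ≤ j) (hjn : j < n) : betaSet (removeRimHook μ i j c hc hc') n =
      insert (c + n - (j + 1)) ((betaSet μ n).erase (betaEntry μ n i)) := by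
  have hβ := betaEntry_removeRimHook (i := i) hc hc' hjn
  ext y
  simp only [mem_insert, mem_erase, mem_betaSet]
  constructor
  · rintro ⟨r, hr, rfl⟩
    rw [hβ]
    split_ifs with h₁ h₂
    · refine Or.inr ⟨fun h => ?_, r, hr, rfl⟩
      rcases h₁ with h₁ | h₁
      · exact (betaEntry_lt_betaEntry h₁ (hij.trans_lt hjn)).ne' h
      · exact (betaEntry_lt_betaEntry (hij.trans_lt h₁) hr).ne h
    · exact Or.inr ⟨(betaEntry_lt_betaEntry (by omega) (by omega)).ne, r + 1, by omega, rfl⟩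
    · exact Or.inl rfl
  · rintro (rfl | ⟨hne, r, hr, rfl⟩)
    · exact ⟨j, hjn, by rw [hβ, if_neg (by omega), if_neg (lt_irrefl j)]⟩
    · have hri : r ≠ i := by rintro rfl; exact hne rfl
      rcases lt_or_ge r i with h | h
      · exact ⟨r, hr, by simp [hβ, h]⟩
      rcases le_or_gt r j with h' | h'
      · refine ⟨r - 1, by omega, ?_⟩
        rw [hβ, if_neg (by omega), if_pos (by omega), Nat.sub_add_cancel (by omega)]
      · exact ⟨r, hr, by simp [hβ, h']⟩

end HookRemoval

/-- The bottom row `j` of the rim hook: the last row whose β-number exceeds `y`. -/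
theorem exists_last_betaEntry_gt {μ : YoungDiagram} {n i y : ℕ} (hcol : μ.colLen 0 ≤ n)
    (hin : i < n) (hy : y < betaEntry μ n i) (hyβ : y ∉ betaSet μ n) :
    ∃ j, i ≤ j ∧ j < n ∧ y < betaEntry μ n j ∧ μ.rowLen (j + 1) + (n - (j + 1)) ≤ y := by
  set P := fun r => y < betaEntry μ n r
  have hin' : i ≤ n - 1 := by omega
  set j := Nat.findGreatest P (n - 1)
  refine ⟨j, Nat.le_findGreatest hin' hy, (Nat.findGreatest_le _).trans_lt (by omega),
    Nat.findGreatest_spec (P := P) hin' hy, ?_⟩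
  rcases lt_or_ge (j + 1) n with h | h
  · have hle :=
      not_lt.1 (Nat.findGreatest_is_greatest (P := P) (n := n - 1) (lt_add_one j) (by omega))
    have hne : betaEntry μ n (j + 1) ≠ y := fun he => hyβ (he ▸ mem_betaSet.2 ⟨_, h, rfl⟩)
    unfold betaEntry at hle hne
    omega
  · rw [YoungDiagram.rowLen_eq_zero_of_colLen_le (hcol.trans h)]
    omega

theorem exists_removeHook_betaSet_eq {N n x : ℕ} {μ : YoungDiagram} (hcol : μ.colLen 0 ≤ n)
    (hx : x ∈ betaSet μ n) (hxN : N ≤ x) (hxN' : x - N ∉ betaSet μ n) :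
    ∃ ν, RemoveHook N μ ν ∧ ν.colLen 0 ≤ n ∧
      betaSet ν n = insert (x - N) ((betaSet μ n).erase x) := by
  have hN : 0 < N := Nat.pos_of_ne_zero fun h => hxN' (by simpa [h] using hx)
  obtain ⟨i, hin, hxi⟩ := mem_betaSet.1 hx
  obtain ⟨j, hij, hjn, hj, hlow⟩ :=
    exists_last_betaEntry_gt hcol hin (show x - N < betaEntry μ n i by omega) hxN'
  unfold betaEntry at hxi hj
  obtain ⟨c, hcx⟩ : ∃ c, c + (n - (j + 1)) = x - N := ⟨x - N - (n - (j + 1)), by omega⟩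
  have hc : c < μ.rowLen j := by omega
  have hc' : μ.rowLen (j + 1) ≤ c := by omega
  set ν := removeRimHook μ i j c hc hc'
  have hνμ : ν ≤ μ := YoungDiagram.restrictRows_le
  have hνcol : ν.colLen 0 ≤ n := not_lt.1 fun h => (YoungDiagram.mem_iff_lt_colLen.1
    (hνμ (YoungDiagram.mem_iff_lt_colLen.2 h))).not_ge hcol
  have hβ : betaSet ν n = insert (x - N) ((betaSet μ n).erase x) := by
    rw [betaSet_removeRimHook hc hc' hij hjn, betaEntry, hxi]
    congr 1
    omega
  have hcard : #ν.cells + N = #μ.cells := card_add_eq_of_betaSet_eq hcol hνcol hx hxN hxN' hβ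
  have hsdiff : #(μ.cells \ ν.cells) = N := by
    rw [card_sdiff_of_subset (YoungDiagram.cells_subset_iff.2 hνμ)]
    omega
  exact ⟨ν, hsdiff ▸ removeHook_removeRimHook hc hc', hνcol, hβ⟩

theorem tDecomposable_of_isBalanced {N n : ℕ} (hN : 0 < N) {μ : YoungDiagram}
    (hcol : μ.colLen 0 ≤ n) (hbal : IsBalanced N n μ) : TDecomposable N μ := by
  induction h : μ.card using Nat.strong_induction_on generalizing μ with
  | _ k ih =>
    rcases eq_or_ne μ ⊥ with rfl | hμ
    · exact .refl
    obtain ⟨x, hx, hxN, hxN'⟩ := exists_mem_betaSet_sub_notMem hN hcol hμ hbal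
    obtain ⟨ν, hhook, hνcol, hβ⟩ := exists_removeHook_betaSet_eq hcol hx hxN hxN'
    have hcard : ν.card < k := by
      have := card_sdiff_of_subset hhook.1
      have := card_le_card hhook.1
      have := hhook.2.1
      simp only [YoungDiagram.card] at h ⊢
      omega
    refine .head hhook (ih _ hcard hνcol (fun r hr => ?_) rfl)
    rw [hβ, card_filter_mod_insert_sub_erase hx hxN hxN', hbal r hr]

/-- **A nonzero determinant forces `N`-decomposability.**  If the matrix `M(λ)` with entries
`m_N(b_i, b_j)`, for the decreasing enumeration `b` of the β-set `B_n(λ)`, has nonzero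
determinant, then each residue class mod `N` contains exactly `n/N` of the `b_i`;
equivalently, `λ` is `N`-decomposable. -/
theorem det_ne_zero_imp_decomposable (N : ℕ) (hN : 3 ≤ N) (lam : YoungDiagram)
    (n : ℕ) (hn : N ∣ n) (hparts : lam.colLen 0 ≤ n)
    (b : Fin n → ℕ) (hb : StrictAnti b) (hbeta : Finset.image b Finset.univ = betaSet lam n)
    (hdet : Matrix.det (Matrix.of fun i j : Fin n => mEntry N (b i) (b j)) ≠ 0) :
    (∀ r < N, (Finset.univ.filter (fun i : Fin n => b i % N = r)).card = n / N) ∧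
      TDecomposable N lam := by
  have : NeZero N := ⟨by omega⟩
  have hres : ∀ r < N, #{i | b i % N = r} = n / N := by
    simpa using card_filter_mod_eq_div_of_det_ne_zero (by simpa using hn) b hdet
  refine ⟨hres, tDecomposable_of_isBalanced (by omega) hparts fun r hr => ?_⟩
  rw [← hbeta, filter_image, card_image_of_injective _ hb.injective]
  exact hres r hr
end

section
/- Fix an integer N ≥ 1 and a complex number q with 0 < |q| < 1, and define Θ(u) = (e^{u/2} − e^{−u/2}) ∏_{m≥1} (1 − e^u q^m)(1 − e^{−u} q^m)/(1 − q^m)² and Θ_N(u) = (e^{u/2} − e^{−u/2}) ∏_{m≥1} (1 − e^u q^{Nm})(1 − e^{−u} q^{Nm})/(1 − q^{Nm})² for u ∈ ℂ. Then for all u, v ∈ ℂ such that Θ_N(Nv) ≠ 0 and Θ(v + 2πir/N) ≠ 0 for every r ∈ {0,…,N−1}, one has Θ_N(Nu)/Θ_N(Nv) = ∏_{r=0}^{N−1} Θ(u + 2πir/N)/Θ(v + 2πir/N). -/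
open scoped BigOperators

/-- The theta function
`Θ(u) = (e^{u/2} − e^{−u/2}) ∏_{m ≥ 1} (1 − e^u q^m)(1 − e^{−u} q^m)/(1 − q^m)²`. -/
noncomputable def Theta (q u : ℂ) : ℂ :=
  (Complex.exp (u / 2) - Complex.exp (-u / 2)) *
    ∏' m : ℕ, ((1 - Complex.exp u * q ^ (m + 1)) * (1 - Complex.exp (-u) * q ^ (m + 1)) /
      (1 - q ^ (m + 1)) ^ 2)

/-!
Write `Θ(u) = (e^{u/2} - e^{-u/2}) (e^u q; q)_∞ (e^{-u} q; q)_∞ / (q; q)_∞²`. Shifting `u`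
by `2πir/N` multiplies `e^{±u}` by `ζ^{±r}` with `ζ = e^{2πi/N}`, and the cyclotomic identity
`∏_r (1 - a ζ^r) = 1 - a^N`, applied factor by factor, turns the product over `r` of the
shifted `q`-Pochhammer symbols into `(e^{±Nu} q^N; q^N)_∞`. Hence
`∏_r Θ(u + 2πir/N) = C · Θ_N(Nu)` with `C` independent of `u`, and `C ≠ 0` because the
product does not vanish at `v`.
-/

open Complex Finset

theorem prod_range_one_sub_mul_pow {R : Type*} [CommRing R] [IsDomain R] {n : ℕ} {ζ : R}
    (hζ : IsPrimitiveRoot ζ n) (hn : 0 < n) (a : R) :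
    ∏ i ∈ range n, (1 - a * ζ ^ i) = 1 - a ^ n := by
  have h := congrArg (Polynomial.eval 1) (X_pow_sub_C_eq_prod hζ hn (rfl : a ^ n = _))
  simp only [Polynomial.eval_sub, Polynomial.eval_pow, Polynomial.eval_X, Polynomial.eval_C,
    Polynomial.eval_prod, one_pow] at h
  rw [h]
  exact prod_congr rfl fun i _ => by ring

/-- `qPochhammer q a` is `(a q; q)_∞`: the product starts at `q ^ 1`, as in `Theta`. -/
noncomputable def qPochhammer (q a : ℂ) : ℂ :=
  ∏' m : ℕ, (1 - a * q ^ (m + 1))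

section qPochhammer

variable {q : ℂ}

theorem summable_norm_mul_pow_succ (hq : ‖q‖ < 1) (a : ℂ) :
    Summable fun m : ℕ => ‖a * q ^ (m + 1)‖ := by
  have hgeom := (summable_nat_add_iff 1).mpr (summable_geometric_of_lt_one (norm_nonneg q) hq)
  simpa [norm_mul, norm_pow] using hgeom.mul_left ‖a‖

theorem multipliable_one_sub_mul_pow (hq : ‖q‖ < 1) (a : ℂ) :
    Multipliable fun m : ℕ => 1 - a * q ^ (m + 1) := by
  simpa [sub_eq_add_neg] using
    multipliable_one_add_of_summable (f := fun m : ℕ => -(a * q ^ (m + 1)))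
      (by simpa using summable_norm_mul_pow_succ hq a)

theorem qPochhammer_one_ne_zero (hq : ‖q‖ < 1) : qPochhammer q 1 ≠ 0 := by
  have hfactor : ∀ m : ℕ, 1 + -q ^ (m + 1) ≠ 0 := fun m h => by
    have hnorm : ‖q ^ (m + 1)‖ < 1 := by
      rw [norm_pow]; exact pow_lt_one₀ (norm_nonneg q) hq m.succ_ne_zero
    rw [← sub_eq_add_neg, sub_eq_zero] at h
    rw [← h, norm_one] at hnorm
    exact hnorm.false
  simpa [qPochhammer, sub_eq_add_neg] using
    tprod_one_add_ne_zero_of_summable hfactor (by simpa using summable_norm_mul_pow_succ hq 1)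

theorem Theta_eq_qPochhammer (hq : ‖q‖ < 1) (u : ℂ) :
    Theta q u = (exp (u / 2) - exp (-u / 2)) *
      (qPochhammer q (exp u) * qPochhammer q (exp (-u)) / qPochhammer q 1 ^ 2) := by
  have hone : Multipliable fun m : ℕ => 1 - q ^ (m + 1) := by
    simpa using multipliable_one_sub_mul_pow hq 1
  have hden : ∏' m : ℕ, (1 - q ^ (m + 1)) ^ 2 = qPochhammer q 1 ^ 2 := by
    simp only [qPochhammer, one_mul, hone.tprod_pow]
  rw [Theta, Multipliable.tprod_div₀ ((multipliable_one_sub_mul_pow hq _).mul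
      (multipliable_one_sub_mul_pow hq _)) (hone.pow 2), hden, Multipliable.tprod_mul
      (multipliable_one_sub_mul_pow hq _) (multipliable_one_sub_mul_pow hq _)]
  · rfl
  · rw [hden]; exact pow_ne_zero 2 (qPochhammer_one_ne_zero hq)

theorem prod_qPochhammer_mul_pow (hq : ‖q‖ < 1) {N : ℕ} (hN : 0 < N) {ζ : ℂ}
    (hζ : IsPrimitiveRoot ζ N) (a : ℂ) :
    ∏ r ∈ range N, qPochhammer q (a * ζ ^ r) = qPochhammer (q ^ N) (a ^ N) := by
  unfold qPochhammer
  rw [← Multipliable.tprod_finsetProd fun r _ => multipliable_one_sub_mul_pow hq _]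
  refine tprod_congr fun m => ?_
  rw [← pow_mul, mul_comm N, pow_mul, ← mul_pow, ← prod_range_one_sub_mul_pow hζ hN]
  exact prod_congr rfl fun r _ => by ring

end qPochhammer

section rootsOfUnityShift

variable {N : ℕ}

theorem exp_add_two_pi_I_mul_div (u : ℂ) (r : ℕ) :
    exp (u + 2 * Real.pi * I * r / N) = exp u * exp (2 * Real.pi * I / N) ^ r := by
  rw [← exp_nat_mul, ← exp_add]
  ring_nf

theorem exp_neg_add_two_pi_I_mul_div (u : ℂ) (r : ℕ) :
    exp (-(u + 2 * Real.pi * I * r / N)) = exp (-u) * (exp (2 * Real.pi * I / N))⁻¹ ^ r := by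
  rw [← exp_neg, ← exp_nat_mul, ← exp_add]
  ring_nf

theorem exp_half_sub_exp_neg_half (w : ℂ) :
    exp (w / 2) - exp (-w / 2) = exp (w / 2) * (1 - exp (-w)) := by
  rw [mul_sub, mul_one, ← exp_add]
  ring_nf

theorem prod_exp_half_sub_exp_neg_half (hN : 0 < N) (u : ℂ) :
    ∏ r ∈ range N, (exp ((u + 2 * Real.pi * I * r / N) / 2) -
        exp (-(u + 2 * Real.pi * I * r / N) / 2)) =
      exp (∑ r ∈ range N, Real.pi * I * r / N) * (exp (N * u / 2) - exp (-(N * u) / 2)) := by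
  have hζ : IsPrimitiveRoot (exp (2 * Real.pi * I / N)) N := isPrimitiveRoot_exp N hN.ne'
  have hsum : ∑ r ∈ range N, (u + 2 * Real.pi * I * r / N) / 2 =
      N * u / 2 + ∑ r ∈ range N, Real.pi * I * r / N := by
    rw [sum_congr rfl fun (r : ℕ) _ => (by ring :
        (u + 2 * Real.pi * I * r / N) / 2 = u / 2 + Real.pi * I * r / N),
      sum_add_distrib, sum_const, card_range, nsmul_eq_mul, mul_div_assoc]
  simp only [exp_half_sub_exp_neg_half, prod_mul_distrib, ← exp_sum, exp_neg_add_two_pi_I_mul_div,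
    prod_range_one_sub_mul_pow hζ.inv hN, hsum, ← exp_nat_mul, mul_neg, exp_add]
  ring

end rootsOfUnityShift

theorem exists_prod_Theta_add_eq_mul_Theta_pow {q : ℂ} (hq : ‖q‖ < 1) {N : ℕ} (hN : 0 < N) :
    ∃ C : ℂ, ∀ u : ℂ,
      ∏ r ∈ range N, Theta q (u + 2 * Real.pi * I * r / N) = C * Theta (q ^ N) (N * u) := by
  have hζ : IsPrimitiveRoot (exp (2 * Real.pi * I / N)) N := isPrimitiveRoot_exp N hN.ne'
  have hqN : ‖q ^ N‖ < 1 := by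
    rw [norm_pow]; exact pow_lt_one₀ (norm_nonneg q) hq hN.ne'
  refine ⟨exp (∑ r ∈ range N, Real.pi * I * r / N) * qPochhammer (q ^ N) 1 ^ 2 /
    qPochhammer q 1 ^ (2 * N), fun u => ?_⟩
  simp only [Theta_eq_qPochhammer hq, Theta_eq_qPochhammer hqN, prod_mul_distrib,
    prod_div_distrib, prod_exp_half_sub_exp_neg_half hN, exp_add_two_pi_I_mul_div,
    exp_neg_add_two_pi_I_mul_div, prod_qPochhammer_mul_pow hq hN hζ,
    prod_qPochhammer_mul_pow hq hN hζ.inv, prod_const, card_range]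
  simp only [← exp_nat_mul, mul_neg]
  field_simp [qPochhammer_one_ne_zero hq, qPochhammer_one_ne_zero hqN]
  ring

theorem theta_level_factorization_general (N : ℕ) (hN : 1 ≤ N) (q : ℂ)
    (hq1 : ‖q‖ < 1) (u v : ℂ)
    (hvr : ∀ r < N, Theta q (v + 2 * Real.pi * Complex.I * r / N) ≠ 0) :
    Theta (q ^ N) ((N : ℂ) * u) / Theta (q ^ N) ((N : ℂ) * v) =
      ∏ r ∈ Finset.range N,
        Theta q (u + 2 * Real.pi * Complex.I * r / N) /
          Theta q (v + 2 * Real.pi * Complex.I * r / N) := by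
  obtain ⟨C, hC⟩ := exists_prod_Theta_add_eq_mul_Theta_pow hq1 hN
  have hC0 : C ≠ 0 := by
    rintro rfl
    refine prod_ne_zero_iff.mpr (fun r hr => hvr r (mem_range.mp hr)) ?_
    rw [hC v, zero_mul]
  rw [prod_div_distrib, hC u, hC v, mul_div_mul_left _ _ hC0]

/-- **Factorization of the level `N` theta function.**
`Θ_N(Nu)/Θ_N(Nv) = ∏_{r mod N} Θ(u + 2πir/N)/Θ(v + 2πir/N)`, where `Θ_N` is the theta
function with `q` replaced by `q^N`. -/
theorem theta_level_factorization (N : ℕ) (hN : 1 ≤ N) (q : ℂ)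
    (hq0 : 0 < ‖q‖) (hq1 : ‖q‖ < 1) (u v : ℂ)
    (hv : Theta (q ^ N) ((N : ℂ) * v) ≠ 0)
    (hvr : ∀ r < N, Theta q (v + 2 * Real.pi * Complex.I * r / N) ≠ 0) :
    Theta (q ^ N) ((N : ℂ) * u) / Theta (q ^ N) ((N : ℂ) * v) =
      ∏ r ∈ Finset.range N,
        Theta q (u + 2 * Real.pi * Complex.I * r / N) /
          Theta q (v + 2 * Real.pi * Complex.I * r / N) :=
  theta_level_factorization_general N hN q hq1 u v hvr
end
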